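/- With P and R_n as above, for each j with 2 \le j \le N+1, the expression (\partial R_n(x)/\partial u_j) P'(x) + R_n'(x) x^{N+1-j} is a polynomial in x of degree at most N-1. -/

import Mathlib

/-- `x` viewed as a Laurent series at `x = ∞` (inverse of the local coordinate `t = x⁻¹`). -/
noncomputable def Xinf : LaurentSeries ℂ := HahnSeries.single (-1 : ℤ) 1

open Polynomial

lemma Xinf_pow (e : ℕ) : Xinf ^ e = HahnSeries.single (-(e : ℤ)) 1 := by
  rw [Xinf, HahnSeries.single_pow]
  norm_num

lemma aeval_Xinf_coeff (Q : Polynomial ℂ) (k : ℤ) :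
    (Polynomial.aeval Xinf Q : LaurentSeries ℂ).coeff k
      = if k ≤ 0 then Q.coeff (-k).toNat else 0 := by
  induction Q using Polynomial.induction_on' with
  | add p q hp hq =>
      rw [map_add, HahnSeries.coeff_add, hp, hq, Polynomial.coeff_add]
      split <;> simp
  | monomial e a =>
      have halg : (algebraMap ℂ (LaurentSeries ℂ)) a = HahnSeries.single (0 : ℤ) a := by
        rw [HahnSeries.algebraMap_apply', show algebraMap ℂ (PowerSeries ℂ) a
            = PowerSeries.C a from rfl, HahnSeries.ofPowerSeries_C, HahnSeries.C_apply]
      rw [Polynomial.aeval_monomial, Xinf_pow, halg, HahnSeries.single_mul_single, zero_add,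
        mul_one, HahnSeries.coeff_single, Polynomial.coeff_monomial]
      by_cases h : k = -(e : ℤ)
      · rw [if_pos h, if_pos (by omega), if_pos (by omega)]
      · rw [if_neg h]
        split_ifs with h1 h2
        · exact absurd (by omega) h
        · rfl
        · rfl

lemma ls_mul_coeff_eq_zero (f g : LaurentSeries ℂ) (a b k : ℤ)
    (hf : ∀ i, i < a → f.coeff i = 0) (hg : ∀ i, i < b → g.coeff i = 0)
    (hk : k < a + b) : (f * g).coeff k = 0 := by
  rw [HahnSeries.coeff_mul]
  refine Finset.sum_eq_zero fun ij hij => ?_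
  rw [Finset.mem_addAntidiagonal] at hij
  obtain ⟨h1, h2, h3⟩ := hij
  by_cases hia : ij.1 < a
  · rw [hf _ hia, zero_mul]
  · rw [hg ij.2 (by omega), mul_zero]

lemma ls_pow_coeff_eq_zero (f : LaurentSeries ℂ) (a : ℤ) (ha : a ≤ 0)
    (hf : ∀ i, i < a → f.coeff i = 0) (e : ℕ) :
    ∀ k, k < (e : ℤ) * a → (f ^ e).coeff k = 0 := by
  induction e with
  | zero =>
      intro k hk
      rw [pow_zero, ← HahnSeries.single_zero_one, HahnSeries.coeff_single,
        if_neg (by push_cast at hk; omega)]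
  | succ e ih =>
      intro k hk
      rw [pow_succ]
      exact ls_mul_coeff_eq_zero _ _ ((e : ℤ) * a) a k ih hf (by push_cast at hk ⊢; linarith)

lemma hasDerivAt_coeff_mul (f g : ℂ → Polynomial ℂ) (f' g' : Polynomial ℂ) (s₀ : ℂ)
    (hf : ∀ m, HasDerivAt (fun s => (f s).coeff m) (f'.coeff m) s₀)
    (hg : ∀ m, HasDerivAt (fun s => (g s).coeff m) (g'.coeff m) s₀) (M : ℕ) :
    HasDerivAt (fun s => (f s * g s).coeff M) ((f' * g s₀ + f s₀ * g').coeff M) s₀ := by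
  have h := HasDerivAt.fun_sum (u := Finset.HasAntidiagonal.antidiagonal M)
    (A := fun x s => (f s).coeff x.1 * (g s).coeff x.2)
    (A' := fun x => f'.coeff x.1 * (g s₀).coeff x.2 + (f s₀).coeff x.1 * g'.coeff x.2)
    (fun x _ => (hf x.1).mul (hg x.2))
  simpa [Polynomial.coeff_mul, Polynomial.coeff_add, Finset.sum_add_distrib] using h

lemma hasDerivAt_coeff_pow (f : ℂ → Polynomial ℂ) (f' : Polynomial ℂ) (s₀ : ℂ)
    (hf : ∀ m, HasDerivAt (fun s => (f s).coeff m) (f'.coeff m) s₀) (e : ℕ) (M : ℕ) :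
    HasDerivAt (fun s => ((f s) ^ e).coeff M)
      ((Polynomial.C (e : ℂ) * (f s₀) ^ (e - 1) * f').coeff M) s₀ := by
  induction e generalizing M with
  | zero => simpa using hasDerivAt_const s₀ ((1 : Polynomial ℂ).coeff M)
  | succ e ih =>
      have h := hasDerivAt_coeff_mul (fun s => (f s) ^ e) f
        (Polynomial.C (e : ℂ) * (f s₀) ^ (e - 1) * f') f' s₀ ih hf M
      have hfun : (fun s => ((f s) ^ (e + 1)).coeff M)
          = fun s => ((f s) ^ e * f s).coeff M := by
        funext s; rw [pow_succ]
      rw [hfun]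
      have hval : (Polynomial.C ((e + 1 : ℕ) : ℂ) * (f s₀) ^ (e + 1 - 1) * f')
          = (Polynomial.C (e : ℂ) * (f s₀) ^ (e - 1) * f') * (f s₀) + (f s₀) ^ e * f' := by
        cases e with
        | zero => simp
        | succ e =>
            push_cast [pow_succ, Polynomial.C_add, Polynomial.C_1]
            ring
      rw [hval]
      exact h

lemma ls_sum_coeff {ι : Type*} (s : Finset ι) (f : ι → LaurentSeries ℂ) (k : ℤ) :
    (∑ i ∈ s, f i).coeff k = ∑ i ∈ s, (f i).coeff k :=
  map_sum (HahnSeries.coeff.addMonoidHom k) f s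

lemma coeff_mul_congr (A B D : Polynomial ℂ) (c d M : ℕ)
    (hAB : ∀ a, c ≤ a → A.coeff a = B.coeff a)
    (hD : ∀ b, d < b → D.coeff b = 0) (hM : c + d ≤ M) :
    (A * D).coeff M = (B * D).coeff M := by
  rw [Polynomial.coeff_mul, Polynomial.coeff_mul]
  refine Finset.sum_congr rfl fun x hx => ?_
  rw [Finset.HasAntidiagonal.mem_antidiagonal] at hx
  by_cases hb : x.2 ≤ d
  · rw [hAB x.1 (by omega)]
  · rw [hD x.2 (by omega), mul_zero, mul_zero]

/-- With `P` and `R_n = (P^{n/(N+1)})₊` as above (the coefficient `u_j`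
varied along the parameter `s`, differentiation in `u_j` encoded coefficientwise),
the expression `(∂R_n/∂u_j) P'(x) + R_n'(x) x^{N+1-j}` is a polynomial in `x`
of degree at most `N - 1`. -/
theorem stmt3 (N n j : ℕ) (hN : 1 ≤ N) (hn : 1 ≤ n) (hj1 : 2 ≤ j) (hj2 : j ≤ N + 1)
    (u : ℕ → ℂ) (s₀ : ℂ)
    (P : ℂ → Polynomial ℂ)
    (hP : ∀ s, P s = Polynomial.X ^ (N + 1)
        - ∑ i ∈ Finset.Icc 2 (N + 1),
            Polynomial.C (if i = j then s else u i) * Polynomial.X ^ (N + 1 - i))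
    (F : ℂ → LaurentSeries ℂ)
    (hFpow : ∀ s, F s ^ (N + 1) = (Polynomial.aeval Xinf (P s)) ^ n)
    (hFlead : ∀ s, (F s).coeff (-(n : ℤ)) = 1)
    (hFlow : ∀ s, ∀ k : ℤ, k < -(n : ℤ) → (F s).coeff k = 0)
    (R : ℂ → Polynomial ℂ)
    (hR : ∀ s, ∀ k : ℤ, k ≤ 0 →
      (Polynomial.aeval Xinf (R s) : LaurentSeries ℂ).coeff k = (F s).coeff k)
    (Ru : Polynomial ℂ)
    (hRu : ∀ m : ℕ, HasDerivAt (fun s => (R s).coeff m) (Ru.coeff m) s₀) :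
    (Ru * Polynomial.derivative (P s₀)
      + Polynomial.derivative (R s₀) * Polynomial.X ^ (N + 1 - j)).degree
        ≤ ((N - 1 : ℕ) : WithBot ℕ) := by
  obtain ⟨q, hq, hq1⟩ : ∃ q, q = n * N ∧ 1 ≤ q :=
    ⟨n * N, rfl, Nat.one_le_iff_ne_zero.mpr (Nat.mul_ne_zero (by omega) (by omega))⟩
  -- coefficients of R s are coefficients of F s
  have hRcoeff : ∀ s (m : ℕ), (R s).coeff m = (F s).coeff (-(m : ℤ)) := by
    intro s m
    have h := hR s (-(m : ℤ)) (by omega)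
    rw [aeval_Xinf_coeff, if_pos (by omega)] at h
    simpa using h
  -- low-order vanishing for aeval Xinf (R s)
  have hAlow : ∀ s, ∀ i : ℤ, i < -(n : ℤ) →
      (Polynomial.aeval Xinf (R s) : LaurentSeries ℂ).coeff i = 0 := by
    intro s i hi
    rw [hR s i (by omega)]
    exact hFlow s i hi
  -- KEY LEMMA: high coefficients of R^(N+1) and P^n agree
  have hL : ∀ s, ∀ M : ℕ, q ≤ M → ((R s) ^ (N + 1)).coeff M = ((P s) ^ n).coeff M := by
    intro s M hM
    rw [hq] at hM
    have h1 : ((R s) ^ (N + 1)).coeff M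
        = ((Polynomial.aeval Xinf (R s) : LaurentSeries ℂ) ^ (N + 1)).coeff (-(M : ℤ)) := by
      rw [← map_pow, aeval_Xinf_coeff, if_pos (by omega)]
      simp
    have h2 : ((P s) ^ n).coeff M
        = ((Polynomial.aeval Xinf (P s) : LaurentSeries ℂ) ^ n).coeff (-(M : ℤ)) := by
      rw [← map_pow, aeval_Xinf_coeff, if_pos (by omega)]
      simp
    rw [h1, h2, ← hFpow s]
    set A : LaurentSeries ℂ := Polynomial.aeval Xinf (R s) with hA
    have hdiff : (A ^ (N + 1) - (F s) ^ (N + 1)).coeff (-(M : ℤ)) = 0 := by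
      rw [← geom_sum₂_mul A (F s) (N + 1)]
      apply ls_mul_coeff_eq_zero _ _ (-((n : ℤ) * N)) 1 _ ?_ ?_ ?_
      · intro i hi
        rw [ls_sum_coeff]
        refine Finset.sum_eq_zero fun i0 hi0 => ?_
        rw [Finset.mem_range] at hi0
        have hi0' : i0 ≤ N := by omega
        apply ls_mul_coeff_eq_zero _ _ ((i0 : ℤ) * (-(n : ℤ))) (((N - i0 : ℕ) : ℤ) * (-(n : ℤ)))
        · exact ls_pow_coeff_eq_zero A (-(n : ℤ)) (by omega) (hAlow s) i0
        · have : N + 1 - 1 - i0 = N - i0 := by omega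
          rw [this]
          exact ls_pow_coeff_eq_zero (F s) (-(n : ℤ)) (by omega) (hFlow s) (N - i0)
        · have hcast : ((N - i0 : ℕ) : ℤ) = (N : ℤ) - i0 := by
            push_cast [Nat.cast_sub hi0']; ring
          rw [hcast]
          have hMn : ((n * N : ℕ) : ℤ) ≤ (M : ℤ) := by exact_mod_cast hM
          push_cast at hMn
          nlinarith [hMn]
      · intro i hi
        rw [HahnSeries.coeff_sub, hR s i (by omega), sub_self]
      · have hMn : ((n * N : ℕ) : ℤ) ≤ (M : ℤ) := by exact_mod_cast hM
        push_cast at hMn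
        nlinarith [hMn]
    rw [HahnSeries.coeff_sub] at hdiff
    exact sub_eq_zero.mp hdiff
  -- derivative of coefficients of P
  have hPd : ∀ m : ℕ, HasDerivAt (fun s => (P s).coeff m)
      ((-(Polynomial.X : Polynomial ℂ) ^ (N + 1 - j)).coeff m) s₀ := by
    intro m
    have hfun : (fun s => (P s).coeff m) = fun s =>
        ((Polynomial.X : Polynomial ℂ) ^ (N + 1)).coeff m
          - ∑ i ∈ Finset.Icc 2 (N + 1),
              (if i = j then s else u i) * ((Polynomial.X : Polynomial ℂ) ^ (N + 1 - i)).coeff m := by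
      funext s
      rw [hP s, Polynomial.coeff_sub, Polynomial.finset_sum_coeff]
      simp only [Polynomial.coeff_C_mul]
    rw [hfun]
    have hs : HasDerivAt (fun s => ∑ i ∈ Finset.Icc 2 (N + 1),
        (if i = j then s else u i) * ((Polynomial.X : Polynomial ℂ) ^ (N + 1 - i)).coeff m)
        (∑ i ∈ Finset.Icc 2 (N + 1),
          (if i = j then ((Polynomial.X : Polynomial ℂ) ^ (N + 1 - i)).coeff m else 0)) s₀ := by
      apply HasDerivAt.fun_sum
      intro i _
      by_cases hij : i = j
      · simp only [if_pos hij]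
        exact hasDerivAt_mul_const _
      · simp only [if_neg hij]
        exact hasDerivAt_const _ _
    have hsum : (∑ i ∈ Finset.Icc 2 (N + 1),
        (if i = j then ((Polynomial.X : Polynomial ℂ) ^ (N + 1 - i)).coeff m else 0))
        = ((Polynomial.X : Polynomial ℂ) ^ (N + 1 - j)).coeff m := by
      rw [Finset.sum_ite_eq' (Finset.Icc 2 (N + 1)) j
        (fun i => ((Polynomial.X : Polynomial ℂ) ^ (N + 1 - i)).coeff m),
        if_pos (Finset.mem_Icc.mpr ⟨hj1, hj2⟩)]
    have h2 := (hasDerivAt_const s₀ (((Polynomial.X : Polynomial ℂ) ^ (N + 1)).coeff m)).fun_sub hs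
    rw [hsum] at h2
    simpa using h2
  -- E1
  have hE1 : ∀ a : ℕ, q ≤ a →
      (Polynomial.C ((N + 1 : ℕ) : ℂ) * (R s₀) ^ N * Ru).coeff a
        = (Polynomial.C ((n : ℕ) : ℂ) * (P s₀) ^ (n - 1)
            * (-(Polynomial.X : Polynomial ℂ) ^ (N + 1 - j))).coeff a := by
    intro a ha
    have h1 := hasDerivAt_coeff_pow R Ru s₀ hRu (N + 1) a
    have h2 := hasDerivAt_coeff_pow P (-(Polynomial.X : Polynomial ℂ) ^ (N + 1 - j)) s₀ hPd n a
    have hfun : (fun s => ((R s) ^ (N + 1)).coeff a) = fun s => ((P s) ^ n).coeff a :=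
      funext fun s => hL s a ha
    rw [← hfun] at h2
    have := h1.unique h2
    rw [Nat.add_sub_cancel] at this
    exact this
  -- E2
  have hE2 : ∀ a : ℕ, q ≤ a + 1 →
      (Polynomial.C ((N + 1 : ℕ) : ℂ) * (R s₀) ^ N * Polynomial.derivative (R s₀)).coeff a
        = (Polynomial.C ((n : ℕ) : ℂ) * (P s₀) ^ (n - 1) * Polynomial.derivative (P s₀)).coeff a := by
    intro a ha
    have h1 : (Polynomial.derivative ((R s₀) ^ (N + 1))).coeff a
        = (Polynomial.derivative ((P s₀) ^ n)).coeff a := by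
      rw [Polynomial.coeff_derivative, Polynomial.coeff_derivative, hL s₀ (a + 1) ha]
    rwa [Polynomial.derivative_pow, Polynomial.derivative_pow, Nat.add_sub_cancel] at h1
  -- vanishing of high coefficients of P s₀ and its derivative
  have hPc : ∀ b : ℕ, N + 1 < b → (P s₀).coeff b = 0 := by
    intro b hb
    rw [hP s₀, Polynomial.coeff_sub, Polynomial.finset_sum_coeff]
    have h1 : ((Polynomial.X : Polynomial ℂ) ^ (N + 1)).coeff b = 0 := by
      rw [Polynomial.coeff_X_pow, if_neg (by omega)]
    rw [h1, Finset.sum_eq_zero, sub_zero]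
    intro i hi
    rw [Finset.mem_Icc] at hi
    have h2 : ((Polynomial.X : Polynomial ℂ) ^ (N + 1 - i)).coeff b = 0 := by
      rw [Polynomial.coeff_X_pow, if_neg (by omega)]
    rw [Polynomial.coeff_C_mul, h2, mul_zero]
  have hP'c : ∀ b : ℕ, N < b → (Polynomial.derivative (P s₀)).coeff b = 0 := by
    intro b hb
    rw [Polynomial.coeff_derivative, hPc (b + 1) (by omega), zero_mul]
  set G := Ru * Polynomial.derivative (P s₀)
    + Polynomial.derivative (R s₀) * Polynomial.X ^ (N + 1 - j) with hG
  -- coefficients of T vanish in high degree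
  have hT : ∀ M : ℕ, q + N ≤ M →
      (Polynomial.C ((N + 1 : ℕ) : ℂ) * ((R s₀) ^ N * G)).coeff M = 0 := by
    intro M hM
    have hsplit : Polynomial.C ((N + 1 : ℕ) : ℂ) * ((R s₀) ^ N * G)
        = (Polynomial.C ((N + 1 : ℕ) : ℂ) * (R s₀) ^ N * Ru) * Polynomial.derivative (P s₀)
          + (Polynomial.C ((N + 1 : ℕ) : ℂ) * (R s₀) ^ N * Polynomial.derivative (R s₀))
              * Polynomial.X ^ (N + 1 - j) := by
      rw [hG]; ring
    rw [hsplit, Polynomial.coeff_add]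
    rw [coeff_mul_congr _ (Polynomial.C ((n : ℕ) : ℂ) * (P s₀) ^ (n - 1)
        * (-(Polynomial.X : Polynomial ℂ) ^ (N + 1 - j))) _ q N M hE1 hP'c (by omega)]
    rw [coeff_mul_congr _ (Polynomial.C ((n : ℕ) : ℂ) * (P s₀) ^ (n - 1)
        * Polynomial.derivative (P s₀)) _ (q - 1) (N + 1 - j) M
        (fun a ha => hE2 a (by omega))
        (fun b hb => by rw [Polynomial.coeff_X_pow, if_neg (by omega)]) (by omega)]
    rw [← Polynomial.coeff_add]
    have hzero : Polynomial.C ((n : ℕ) : ℂ) * (P s₀) ^ (n - 1)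
          * (-(Polynomial.X : Polynomial ℂ) ^ (N + 1 - j)) * Polynomial.derivative (P s₀)
        + Polynomial.C ((n : ℕ) : ℂ) * (P s₀) ^ (n - 1) * Polynomial.derivative (P s₀)
            * Polynomial.X ^ (N + 1 - j) = 0 := by ring
    rw [hzero, Polynomial.coeff_zero]
  -- degree bound for T
  have hTd : (Polynomial.C ((N + 1 : ℕ) : ℂ) * ((R s₀) ^ N * G)).degree
      ≤ ((q + N - 1 : ℕ) : WithBot ℕ) := by
    rw [Polynomial.degree_le_iff_coeff_zero]
    intro m hm
    rw [Nat.cast_lt] at hm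
    exact hT m (by omega)
  -- R s₀ is monic of degree n
  have hR0coeff : ∀ m : ℕ, n < m → (R s₀).coeff m = 0 := by
    intro m hm
    rw [hRcoeff s₀ m]
    exact hFlow s₀ _ (by exact_mod_cast by omega : -(m : ℤ) < -(n : ℤ))
  have hR0n : (R s₀).coeff n = 1 := by rw [hRcoeff]; exact hFlead s₀
  have hmon : (R s₀).Monic := by
    have hnd : (R s₀).natDegree = n := by
      apply le_antisymm
      · exact Polynomial.natDegree_le_iff_coeff_eq_zero.mpr hR0coeff
      · exact Polynomial.le_natDegree_of_ne_zero (by rw [hR0n]; exact one_ne_zero)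
    rw [Polynomial.Monic, Polynomial.leadingCoeff, hnd, hR0n]
  have hmonN : ((R s₀) ^ N).Monic := hmon.pow N
  have hdegRN : ((R s₀) ^ N).degree = ((q : ℕ) : WithBot ℕ) := by
    rw [Polynomial.degree_eq_natDegree hmonN.ne_zero, hmon.natDegree_pow]
    have hnd : (R s₀).natDegree = n := by
      apply le_antisymm
      · exact Polynomial.natDegree_le_iff_coeff_eq_zero.mpr hR0coeff
      · exact Polynomial.le_natDegree_of_ne_zero (by rw [hR0n]; exact one_ne_zero)
    rw [hnd, hq, Nat.mul_comm]
  -- conclude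
  rcases eq_or_ne G 0 with h0 | h0
  · rw [h0, Polynomial.degree_zero]
    exact bot_le
  · have hdeg : (Polynomial.C ((N + 1 : ℕ) : ℂ) * ((R s₀) ^ N * G)).degree
        = G.degree + ((q : ℕ) : WithBot ℕ) := by
      rw [Polynomial.degree_C_mul (by exact_mod_cast Nat.succ_ne_zero N :
        ((N + 1 : ℕ) : ℂ) ≠ 0), mul_comm ((R s₀) ^ N) G, hmonN.degree_mul, hdegRN]
    rw [hdeg] at hTd
    rw [Polynomial.degree_eq_natDegree h0] at hTd ⊢
    rw [← Nat.cast_add, Nat.cast_le (α := WithBot ℕ)] at hTd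
    exact_mod_cast (by omega : G.natDegree ≤ N - 1)
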